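/- Let A = (α,β/K) be a division quaternion algebra over a field K and let 𝔭, 𝔮 ∈ A[X] be monic irreducible polynomials. If the norms N(𝔭) = 𝔭·𝔭̄ and N(𝔮) = 𝔮·𝔮̄ are relatively prime in K[X], then there exist monic irreducible polynomials 𝔭₁, 𝔮₁ ∈ A[X] such that N(𝔭₁) = N(𝔭), N(𝔮₁) = N(𝔮), and 𝔭·𝔮 = 𝔮₁·𝔭₁. -/

import Mathlib

open Polynomial Quaternion


open Polynomial Quaternion

/-- Coefficientwise conjugation of a quaternionic polynomial: if `𝔭 = Σ aᵢ Xⁱ`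
then `conjPoly 𝔭 = Σ āᵢ Xⁱ`. -/
noncomputable def conjPoly {K : Type*} [Field K] {α β : K}
    (p : Polynomial ℍ[K,α,β]) : Polynomial ℍ[K,α,β] :=
  p.sum fun n a => Polynomial.C (star a) * Polynomial.X ^ n

namespace SemicommAux

variable {K : Type*} [Field K] {α β : K}

lemma coeff_conjPoly (p : Polynomial ℍ[K,α,β]) (n : ℕ) :
    (conjPoly p).coeff n = star (p.coeff n) := by
  classical
  unfold conjPoly
  rw [Polynomial.sum, finset_sum_coeff]
  simp only [coeff_C_mul, coeff_X_pow, mul_ite, mul_one, mul_zero]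
  by_cases h : n ∈ p.support
  · rw [Finset.sum_eq_single_of_mem n h (fun i _ hi => by simp [Ne.symm hi])]
    simp
  · rw [Finset.sum_eq_zero (fun i hi => by
      rcases eq_or_ne n i with rfl | hne
      · exact absurd hi h
      · simp [hne])]
    rw [Polynomial.notMem_support_iff.mp h, star_zero]

lemma conjPoly_conj (p : Polynomial ℍ[K,α,β]) : conjPoly (conjPoly p) = p := by
  apply Polynomial.ext; intro n; simp [coeff_conjPoly]

lemma conjPoly_add (p q : Polynomial ℍ[K,α,β]) :
    conjPoly (p + q) = conjPoly p + conjPoly q := by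
  apply Polynomial.ext; intro n; simp [coeff_conjPoly, star_add]

lemma conjPoly_zero : conjPoly (0 : Polynomial ℍ[K,α,β]) = 0 := by
  apply Polynomial.ext; intro n; simp [coeff_conjPoly]

lemma conjPoly_mul (p q : Polynomial ℍ[K,α,β]) :
    conjPoly (p * q) = conjPoly q * conjPoly p := by
  apply Polynomial.ext; intro n
  rw [coeff_conjPoly, coeff_mul, coeff_mul, star_sum]
  conv_rhs => rw [← Finset.HasAntidiagonal.map_swap_antidiagonal (n := n)]
  rw [Finset.sum_map]
  refine Finset.sum_congr rfl fun x _ => ?_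
  simp [coeff_conjPoly, star_mul]

lemma conjPoly_eq_zero {p : Polynomial ℍ[K,α,β]} (h : conjPoly p = 0) : p = 0 := by
  rw [← conjPoly_conj p, h, conjPoly_zero]

lemma natDegree_conjPoly (p : Polynomial ℍ[K,α,β]) :
    (conjPoly p).natDegree = p.natDegree := by
  have key : ∀ q : Polynomial ℍ[K,α,β], (conjPoly q).natDegree ≤ q.natDegree := by
    intro q
    rw [natDegree_le_iff_coeff_eq_zero]
    intro m hm
    rw [coeff_conjPoly, coeff_eq_zero_of_natDegree_lt hm, star_zero]
  refine le_antisymm (key p) ?_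
  conv_lhs => rw [← conjPoly_conj p]
  exact key _

lemma degree_conjPoly (p : Polynomial ℍ[K,α,β]) : (conjPoly p).degree = p.degree := by
  rcases eq_or_ne p 0 with rfl | hp
  · rw [conjPoly_zero]
  · have h1 : conjPoly p ≠ 0 := fun h => hp (conjPoly_eq_zero h)
    rw [degree_eq_natDegree h1, degree_eq_natDegree hp, natDegree_conjPoly]

lemma leadingCoeff_conjPoly (p : Polynomial ℍ[K,α,β]) :
    (conjPoly p).leadingCoeff = star p.leadingCoeff := by
  rw [leadingCoeff, natDegree_conjPoly, coeff_conjPoly, leadingCoeff]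

lemma monic_conjPoly {p : Polynomial ℍ[K,α,β]} (hp : p.Monic) : (conjPoly p).Monic := by
  rw [Monic, leadingCoeff_conjPoly, hp.leadingCoeff, star_one]

lemma conjPoly_map (t : K[X]) :
    conjPoly (t.map (algebraMap K ℍ[K,α,β])) = t.map (algebraMap K ℍ[K,α,β]) := by
  apply Polynomial.ext; intro n
  rw [coeff_conjPoly, coeff_map]
  rw [QuaternionAlgebra.algebraMap_eq]
  ext <;> simp

end SemicommAux

section Part2

variable {K : Type*} [Field K] {α β : K}
variable (hdiv : ∀ x : ℍ[K,α,β], x ≠ 0 → IsUnit x)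

include hdiv in
lemma nzd : NoZeroDivisors ℍ[K,α,β] := by
  constructor
  intro a b hab
  by_contra h
  push_neg at h
  obtain ⟨ha, hb⟩ := h
  obtain ⟨u, hu⟩ := hdiv a ha
  apply hb
  have key : ↑u⁻¹ * (a * b) = b := by
    rw [← hu, ← mul_assoc, Units.inv_mul, one_mul]
  rw [← key, hab, mul_zero]

/-- if coefficients commute pairwise, polynomials commute -/
lemma poly_comm {p q : Polynomial ℍ[K,α,β]}
    (h : ∀ i j, p.coeff i * q.coeff j = q.coeff j * p.coeff i) : p * q = q * p := by
  apply Polynomial.ext; intro n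
  rw [coeff_mul, coeff_mul]
  conv_rhs => rw [← Finset.HasAntidiagonal.map_swap_antidiagonal (n := n)]
  rw [Finset.sum_map]
  refine Finset.sum_congr rfl fun x _ => ?_
  simp [h]

lemma central_map (t : K[X]) (r : Polynomial ℍ[K,α,β]) :
    t.map (algebraMap K ℍ[K,α,β]) * r = r * t.map (algebraMap K ℍ[K,α,β]) := by
  apply poly_comm
  intro i j
  rw [coeff_map]
  exact (Algebra.commutes (t.coeff i) (r.coeff j))

include hdiv in
lemma isUnit_C_of_ne {x : ℍ[K,α,β]} (hx : x ≠ 0) : IsUnit (Polynomial.C x) :=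
  (hdiv x hx).map (Polynomial.C.toMonoidHom)

include hdiv in
lemma isUnit_of_natDegree_zero {p : Polynomial ℍ[K,α,β]} (hp : p ≠ 0)
    (h : p.natDegree = 0) : IsUnit p := by
  rw [Polynomial.eq_C_of_natDegree_eq_zero h]
  refine isUnit_C_of_ne hdiv ?_
  intro h0
  exact hp (by rw [Polynomial.eq_C_of_natDegree_eq_zero h, h0, map_zero])

include hdiv in
lemma natDegree_zero_of_isUnit {p : Polynomial ℍ[K,α,β]} (hp : IsUnit p) :
    p.natDegree = 0 := by
  haveI := nzd hdiv
  obtain ⟨u, hu⟩ := hp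
  have h1 : (↑u : Polynomial ℍ[K,α,β]) * ↑u⁻¹ = 1 := u.mul_inv
  have hu0 : (↑u : Polynomial ℍ[K,α,β]) ≠ 0 := by
    intro h; rw [h, zero_mul] at h1; exact zero_ne_one h1
  have hui0 : (↑u⁻¹ : Polynomial ℍ[K,α,β]) ≠ 0 := by
    intro h; rw [h, mul_zero] at h1; exact zero_ne_one h1
  have h2 := Polynomial.natDegree_mul hu0 hui0
  rw [h1, Polynomial.natDegree_one] at h2
  rw [← hu]
  omega

include hdiv in
lemma isUnit_of_left_inv {w b : Polynomial ℍ[K,α,β]} (h : w * b = 1) : IsUnit b := by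
  haveI := nzd hdiv
  have hb0 : b ≠ 0 := by
    intro h0; rw [h0, mul_zero] at h; exact zero_ne_one h
  have hw0 : w ≠ 0 := by
    intro h0; rw [h0, zero_mul] at h; exact zero_ne_one h
  have := Polynomial.natDegree_mul hw0 hb0
  rw [h, Polynomial.natDegree_one] at this
  exact isUnit_of_natDegree_zero hdiv hb0 (by omega)

/-- left division with remainder -/
lemma left_divmod (r g : Polynomial ℍ[K,α,β]) (hg : g.Monic) :
    ∃ q rem : Polynomial ℍ[K,α,β], r = q * g + rem ∧ rem.degree < g.degree := by
  have hcg : (conjPoly g).Monic := SemicommAux.monic_conjPoly hg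
  have h := Polynomial.modByMonic_add_div (conjPoly r) (conjPoly g)
  refine ⟨conjPoly (conjPoly r /ₘ conjPoly g), conjPoly (conjPoly r %ₘ conjPoly g), ?_, ?_⟩
  · conv_lhs => rw [← SemicommAux.conjPoly_conj r, ← h]
    rw [SemicommAux.conjPoly_add, SemicommAux.conjPoly_mul, SemicommAux.conjPoly_conj]
    rw [add_comm]
  · rw [SemicommAux.degree_conjPoly]
    rw [← SemicommAux.degree_conjPoly g]
    exact Polynomial.degree_modByMonic_lt _ hcg

include hdiv in
lemma exists_monic_generator {S : Set (Polynomial ℍ[K,α,β])}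
    (hsub : ∀ a ∈ S, ∀ b ∈ S, a - b ∈ S)
    (hmul : ∀ r : Polynomial ℍ[K,α,β], ∀ a ∈ S, r * a ∈ S)
    (hne : ∃ a ∈ S, a ≠ 0) :
    ∃ g ∈ S, g.Monic ∧ ∀ r ∈ S, ∃ q, r = q * g := by
  haveI := nzd hdiv
  classical
  set T : Set ℕ := {n | ∃ a ∈ S, a ≠ 0 ∧ a.natDegree = n} with hT
  have hTne : T.Nonempty := by
    obtain ⟨a, ha, ha0⟩ := hne
    exact ⟨a.natDegree, a, ha, ha0, rfl⟩
  obtain ⟨a, haS, ha0, hadeg⟩ := Nat.sInf_mem hTne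
  have hmin : ∀ b ∈ S, b ≠ 0 → a.natDegree ≤ b.natDegree := by
    intro b hb hb0
    rw [hadeg]
    exact Nat.sInf_le ⟨b, hb, hb0, rfl⟩
  have hlc : a.leadingCoeff ≠ 0 := Polynomial.leadingCoeff_ne_zero.mpr ha0
  obtain ⟨w, hwa⟩ := hdiv a.leadingCoeff hlc
  set g : Polynomial ℍ[K,α,β] := Polynomial.C ((↑w⁻¹ : ℍ[K,α,β])) * a with hgdef
  have hgS : g ∈ S := hmul _ a haS
  have hcoeffg : g.coeff a.natDegree = 1 := by
    rw [hgdef, Polynomial.coeff_C_mul, ← Polynomial.leadingCoeff, ← hwa, Units.inv_mul]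
  have hgdeg : g.natDegree = a.natDegree := by
    refine le_antisymm (Polynomial.natDegree_C_mul_le _ _) ?_
    exact Polynomial.le_natDegree_of_ne_zero (by rw [hcoeffg]; exact one_ne_zero)
  have hgm : g.Monic := by
    rw [Polynomial.Monic, Polynomial.leadingCoeff, hgdeg, hcoeffg]
  refine ⟨g, hgS, hgm, ?_⟩
  intro r hr
  obtain ⟨q, rem, hre, hdeg⟩ := left_divmod r g hgm
  have hremS : rem ∈ S := by
    have h1 : rem = r - q * g := by rw [hre, add_sub_cancel_left]
    rw [h1]
    exact hsub _ hr _ (hmul q g hgS)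
  rcases eq_or_ne rem 0 with h0 | h0
  · exact ⟨q, by rw [hre, h0, add_zero]⟩
  · exfalso
    have h2 : rem.natDegree < g.natDegree := Polynomial.natDegree_lt_natDegree h0 hdeg
    have h3 := hmin rem hremS h0
    omega

end Part2

section Part3

variable {K : Type*} [Field K] {α β : K}
variable (hdiv : ∀ x : ℍ[K,α,β], x ≠ 0 → IsUnit x)

include hdiv in
lemma monicize {p u v : Polynomial ℍ[K,α,β]} (hm : p.Monic) (h : p = u * v)
    (hu : ¬ IsUnit u) (hv : ¬ IsUnit v) :
    ∃ a b : Polynomial ℍ[K,α,β], p = a * b ∧ a.Monic ∧ b.Monic ∧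
      (IsUnit a → False) ∧ (IsUnit b → False) := by
  haveI := nzd hdiv
  have hp0 : p ≠ 0 := hm.ne_zero
  have hv0 : v ≠ 0 := by rintro rfl; rw [mul_zero] at h; exact hp0 h
  have hlc : v.leadingCoeff ≠ 0 := Polynomial.leadingCoeff_ne_zero.mpr hv0
  obtain ⟨w, hwa⟩ := hdiv v.leadingCoeff hlc
  have hCw : IsUnit (Polynomial.C ((↑w : ℍ[K,α,β]))) :=
    isUnit_C_of_ne hdiv w.ne_zero
  have hCwi : IsUnit (Polynomial.C ((↑w⁻¹ : ℍ[K,α,β]))) :=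
    isUnit_C_of_ne hdiv w⁻¹.ne_zero
  set b : Polynomial ℍ[K,α,β] := Polynomial.C ((↑w⁻¹ : ℍ[K,α,β])) * v with hbdef
  set a : Polynomial ℍ[K,α,β] := u * Polynomial.C ((↑w : ℍ[K,α,β])) with hadef
  have hab : p = a * b := by
    rw [h, hadef, hbdef, mul_assoc, ← mul_assoc (Polynomial.C ((↑w : ℍ[K,α,β]))),
      ← Polynomial.C_mul, Units.mul_inv, Polynomial.C_1, one_mul]
  have hcoeffb : b.coeff v.natDegree = 1 := by
    rw [hbdef, Polynomial.coeff_C_mul, ← Polynomial.leadingCoeff, ← hwa, Units.inv_mul]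
  have hbdeg : b.natDegree = v.natDegree := by
    refine le_antisymm (Polynomial.natDegree_C_mul_le _ _) ?_
    exact Polynomial.le_natDegree_of_ne_zero (by rw [hcoeffb]; exact one_ne_zero)
  have hbm : b.Monic := by rw [Polynomial.Monic, Polynomial.leadingCoeff, hbdeg, hcoeffb]
  have ham : a.Monic := Polynomial.Monic.of_mul_monic_right hbm (hab ▸ hm)
  refine ⟨a, b, hab, ham, hbm, ?_, ?_⟩
  · intro ha
    apply hu
    have : u = a * Polynomial.C ((↑w⁻¹ : ℍ[K,α,β])) := by
      rw [hadef, mul_assoc, ← Polynomial.C_mul, Units.mul_inv, Polynomial.C_1, mul_one]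
    rw [this]
    exact ha.mul hCwi
  · intro hb
    apply hv
    have : v = Polynomial.C ((↑w : ℍ[K,α,β])) * b := by
      rw [hbdef, ← mul_assoc, ← Polynomial.C_mul, Units.mul_inv, Polynomial.C_1, one_mul]
    rw [this]
    exact hCw.mul hb

include hdiv in
lemma irred_aux {𝔭₁ 𝔮₁ 𝔮 : Polynomial ℍ[K,α,β]}
    (h𝔮₁m : 𝔮₁.Monic) (h𝔮₁d : 𝔮₁.natDegree ≠ 0)
    (h𝔮0 : 𝔮 ≠ 0) (h𝔮i : Irreducible 𝔮)
    (inj : ∀ r t : Polynomial ℍ[K,α,β], r * 𝔭₁ = t * 𝔮 → ∃ z, r = z * 𝔮₁) :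
    Irreducible 𝔮₁ := by
  haveI := nzd hdiv
  constructor
  · intro h; exact h𝔮₁d (natDegree_zero_of_isUnit hdiv h)
  · intro u v huv
    by_contra hcon
    push_neg at hcon
    obtain ⟨hu, hv⟩ := hcon
    obtain ⟨a, b, hab, ham, hbm, hua, hvb⟩ := monicize hdiv h𝔮₁m huv hu hv
    set S : Set (Polynomial ℍ[K,α,β]) := {r | ∃ x y, r = x * (b * 𝔭₁) + y * 𝔮} with hS
    have hsub : ∀ r ∈ S, ∀ s ∈ S, r - s ∈ S := by
      rintro r ⟨x₁, y₁, rfl⟩ s ⟨x₂, y₂, rfl⟩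
      exact ⟨x₁ - x₂, y₁ - y₂, by noncomm_ring⟩
    have hmulS : ∀ t : Polynomial ℍ[K,α,β], ∀ s ∈ S, t * s ∈ S := by
      rintro t s ⟨x, y, rfl⟩
      exact ⟨t * x, t * y, by noncomm_ring⟩
    have hqS : 𝔮 ∈ S := ⟨0, 1, by noncomm_ring⟩
    obtain ⟨g, hgS, hgm, hgen⟩ := exists_monic_generator hdiv hsub hmulS ⟨𝔮, hqS, h𝔮0⟩
    obtain ⟨c, hc⟩ := hgen 𝔮 hqS
    rcases h𝔮i.isUnit_or_isUnit hc with hcu | hgu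
    · -- c is a unit : b * 𝔭₁ ∈ S ⊆ (multiples of 𝔮)
      obtain ⟨cu, hcu'⟩ := hcu
      have hbpS : b * 𝔭₁ ∈ S := ⟨1, 0, by noncomm_ring⟩
      obtain ⟨q₂, hq₂⟩ := hgen _ hbpS
      have hg : g = ↑cu⁻¹ * 𝔮 := by rw [hc, ← hcu', ← mul_assoc, Units.inv_mul, one_mul]
      have key : b * 𝔭₁ = (q₂ * ↑cu⁻¹) * 𝔮 := by rw [hq₂, hg, mul_assoc]
      obtain ⟨z, hz⟩ := inj _ _ key
      have hb0 : b ≠ 0 := hbm.ne_zero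
      have h1 : (1 : Polynomial ℍ[K,α,β]) * b = (z * a) * b := by
        conv_lhs => rw [one_mul, hz, hab]
        noncomm_ring
      exact hua (isUnit_of_left_inv hdiv (mul_right_cancel₀ hb0 h1).symm)
    · -- g is a unit : 1 ∈ S
      obtain ⟨x₀, y₀, hg0⟩ := hgS
      obtain ⟨gu, hgu'⟩ := hgu
      have h1 : (1 : Polynomial ℍ[K,α,β]) =
          (↑gu⁻¹ * x₀) * (b * 𝔭₁) + (↑gu⁻¹ * y₀) * 𝔮 := by
        calc (1 : Polynomial ℍ[K,α,β]) = ↑gu⁻¹ * g := by rw [← hgu', Units.inv_mul]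
          _ = ↑gu⁻¹ * (x₀ * (b * 𝔭₁) + y₀ * 𝔮) := by rw [← hg0]
          _ = (↑gu⁻¹ * x₀) * (b * 𝔭₁) + (↑gu⁻¹ * y₀) * 𝔮 := by noncomm_ring
      set x : Polynomial ℍ[K,α,β] := ↑gu⁻¹ * x₀ with hx
      set y : Polynomial ℍ[K,α,β] := ↑gu⁻¹ * y₀ with hy
      have hxb : x * (b * 𝔭₁) = 1 - y * 𝔮 := by rw [h1]; noncomm_ring
      have key : (𝔭₁ * x * b - 1) * 𝔭₁ = (-(𝔭₁ * y)) * 𝔮 := by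
        calc (𝔭₁ * x * b - 1) * 𝔭₁ = 𝔭₁ * (x * (b * 𝔭₁)) - 𝔭₁ := by noncomm_ring
          _ = 𝔭₁ * (1 - y * 𝔮) - 𝔭₁ := by rw [hxb]
          _ = (-(𝔭₁ * y)) * 𝔮 := by noncomm_ring
      obtain ⟨z, hz⟩ := inj _ _ key
      have hfin : (𝔭₁ * x - z * a) * b = 1 := by
        calc (𝔭₁ * x - z * a) * b = 𝔭₁ * x * b - z * (a * b) := by noncomm_ring
          _ = 𝔭₁ * x * b - (𝔭₁ * x * b - 1) := by rw [← hab, ← hz]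
          _ = 1 := by noncomm_ring
      exact hvb (isUnit_of_left_inv hdiv hfin)

include hdiv in
lemma irred_aux2 {𝔭 𝔮 𝔭₁ 𝔮₁ : Polynomial ℍ[K,α,β]}
    (h𝔭₁m : 𝔭₁.Monic) (h𝔭₁d : 𝔭₁.natDegree ≠ 0)
    (h𝔭0 : 𝔭 ≠ 0) (h𝔭i : Irreducible 𝔭)
    (hrel : 𝔭 * 𝔮 = 𝔮₁ * 𝔭₁)
    (surj : ∀ s : Polynomial ℍ[K,α,β], ∃ r y, s = r * 𝔮 + y * 𝔭₁) :
    Irreducible 𝔭₁ := by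
  haveI := nzd hdiv
  constructor
  · intro h; exact h𝔭₁d (natDegree_zero_of_isUnit hdiv h)
  · intro u v huv
    by_contra hcon
    push_neg at hcon
    obtain ⟨hu, hv⟩ := hcon
    obtain ⟨a, b, hab, ham, hbm, hua, hvb⟩ := monicize hdiv h𝔭₁m huv hu hv
    set S : Set (Polynomial ℍ[K,α,β]) := {r | ∃ x, r * 𝔮 = x * b} with hS
    have hsub : ∀ r ∈ S, ∀ s ∈ S, r - s ∈ S := by
      rintro r ⟨x₁, h₁⟩ s ⟨x₂, h₂⟩
      exact ⟨x₁ - x₂, by rw [sub_mul, h₁, h₂, sub_mul]⟩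
    have hmulS : ∀ t : Polynomial ℍ[K,α,β], ∀ s ∈ S, t * s ∈ S := by
      rintro t s ⟨x, h₁⟩
      exact ⟨t * x, by rw [mul_assoc, h₁, mul_assoc]⟩
    have hpS : 𝔭 ∈ S := ⟨𝔮₁ * a, by rw [hrel, hab, ← mul_assoc]⟩
    obtain ⟨g, hgS, hgm, hgen⟩ := exists_monic_generator hdiv hsub hmulS ⟨𝔭, hpS, h𝔭0⟩
    obtain ⟨c, hc⟩ := hgen 𝔭 hpS
    rcases h𝔭i.isUnit_or_isUnit hc with hcu | hgu
    · -- c unit : S ⊆ multiples of 𝔭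
      obtain ⟨cu, hcu'⟩ := hcu
      have hg : g = ↑cu⁻¹ * 𝔭 := by rw [hc, ← hcu', ← mul_assoc, Units.inv_mul, one_mul]
      obtain ⟨r, y, hb⟩ := surj b
      have hrS : r ∈ S := by
        refine ⟨1 - y * a, ?_⟩
        have : r * 𝔮 = b - y * 𝔭₁ := by rw [hb]; noncomm_ring
        rw [this, hab]
        noncomm_ring
      obtain ⟨q₃, hq₃⟩ := hgen r hrS
      have hr : r = (q₃ * ↑cu⁻¹) * 𝔭 := by rw [hq₃, hg, mul_assoc]
      have hb0 : b ≠ 0 := hbm.ne_zero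
      have hbb : (1 : Polynomial ℍ[K,α,β]) * b = (((q₃ * ↑cu⁻¹) * 𝔮₁ + y) * a) * b := by
        calc (1 : Polynomial ℍ[K,α,β]) * b = b := one_mul b
          _ = r * 𝔮 + y * 𝔭₁ := hb
          _ = (q₃ * ↑cu⁻¹) * (𝔭 * 𝔮) + y * 𝔭₁ := by rw [hr]; noncomm_ring
          _ = (q₃ * ↑cu⁻¹) * (𝔮₁ * (a * b)) + y * (a * b) := by rw [hrel, hab]
          _ = (((q₃ * ↑cu⁻¹) * 𝔮₁ + y) * a) * b := by noncomm_ring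
      exact hua (isUnit_of_left_inv hdiv (mul_right_cancel₀ hb0 hbb).symm)
    · -- g unit : 1 ∈ S, so 𝔮 = x * b
      obtain ⟨gu, hgu'⟩ := hgu
      have h1S : (1 : Polynomial ℍ[K,α,β]) ∈ S := by
        have : (1 : Polynomial ℍ[K,α,β]) = ↑gu⁻¹ * g := by rw [← hgu', Units.inv_mul]
        rw [this]
        exact hmulS _ g hgS
      obtain ⟨x, hx⟩ := h1S
      rw [one_mul] at hx
      obtain ⟨r, y, h1⟩ := surj 1
      have hfin : (r * x + y * a) * b = 1 := by
        calc (r * x + y * a) * b = r * (x * b) + y * (a * b) := by noncomm_ring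
          _ = r * 𝔮 + y * 𝔭₁ := by rw [← hx, ← hab]
          _ = 1 := h1.symm
      exact hvb (isUnit_of_left_inv hdiv hfin)

lemma real_of_selfadj (h2 : (2:K) ≠ 0) {x : ℍ[K,α,β]} (hx : star x = x) :
    algebraMap K ℍ[K,α,β] x.re = x := by
  have comp : ∀ t : K, -t = t → t = 0 := by
    intro t ht
    have h4 : (2:K) * t = 0 := by linear_combination -ht
    rcases mul_eq_zero.mp h4 with h | h
    · exact absurd h h2
    · exact h
  have hI : x.imI = 0 := comp _ (by rw [← QuaternionAlgebra.imI_star]; rw [hx])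
  have hJ : x.imJ = 0 := comp _ (by rw [← QuaternionAlgebra.imJ_star]; rw [hx])
  have hK : x.imK = 0 := comp _ (by rw [← QuaternionAlgebra.imK_star]; rw [hx])
  rw [QuaternionAlgebra.algebraMap_eq]
  ext <;> simp [hI, hJ, hK]

lemma pullback (h2 : (2:K) ≠ 0) {s : Polynomial ℍ[K,α,β]} (hs : conjPoly s = s) :
    ∃ t : K[X], t.map (algebraMap K ℍ[K,α,β]) = s := by
  classical
  refine ⟨∑ n ∈ s.support, Polynomial.C ((s.coeff n).re) * Polynomial.X ^ n, ?_⟩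
  apply Polynomial.ext; intro n
  rw [Polynomial.coeff_map]
  have hcoeff : (∑ m ∈ s.support, Polynomial.C ((s.coeff m).re) * Polynomial.X ^ m).coeff n
      = (s.coeff n).re := by
    rw [Polynomial.finset_sum_coeff]
    simp only [Polynomial.coeff_C_mul, Polynomial.coeff_X_pow, mul_ite, mul_one, mul_zero]
    by_cases h : n ∈ s.support
    · rw [Finset.sum_eq_single_of_mem n h (fun i _ hi => by simp [Ne.symm hi])]
      simp
    · rw [Finset.sum_eq_zero (fun i hi => by
        rcases eq_or_ne n i with rfl | hne
        · exact absurd hi h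
        · simp [hne])]
      rw [Polynomial.notMem_support_iff.mp h]
      rfl
  rw [hcoeff]
  apply real_of_selfadj h2
  have := congrArg (fun p => Polynomial.coeff p n) hs
  simpa [SemicommAux.coeff_conjPoly] using this

lemma comm_of_two (h2 : (2:K) = 0) (x y : ℍ[K,α,β]) : x * y = y * x := by
  ext
  · simp only [QuaternionAlgebra.re_mul]; ring
  · simp only [QuaternionAlgebra.imI_mul]
    linear_combination (β * (x.imK * y.imJ - x.imJ * y.imK)) * h2
  · simp only [QuaternionAlgebra.imJ_mul]
    linear_combination (α * (x.imI * y.imK - x.imK * y.imI)) * h2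
  · simp only [QuaternionAlgebra.imK_mul]
    linear_combination (x.imI * y.imJ - x.imJ * y.imI) * h2

end Part3

open SemicommAux

/-- Let `A = (α,β/K)` be a division quaternion algebra over a field `K` and
`𝔭, 𝔮 ∈ A[X]` monic irreducible polynomials.  If the norms `N(𝔭) = 𝔭·𝔭̄` and `N(𝔮) = 𝔮·𝔮̄`
(elements `n𝔭, n𝔮` of `K[X]`) are relatively prime in `K[X]`, then there are monic irreducible
`𝔭₁, 𝔮₁ ∈ A[X]` with `N(𝔭₁) = N(𝔭)`, `N(𝔮₁) = N(𝔮)` and `𝔭·𝔮 = 𝔮₁·𝔭₁`. -/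
theorem semicommutativity {K : Type*} [Field K] (α β : K) (hα : α ≠ 0) (hβ : β ≠ 0)
    (hdiv : ∀ x : ℍ[K,α,β], x ≠ 0 → IsUnit x)
    (𝔭 𝔮 : Polynomial ℍ[K,α,β]) (h𝔭m : 𝔭.Monic) (h𝔮m : 𝔮.Monic)
    (h𝔭i : Irreducible 𝔭) (h𝔮i : Irreducible 𝔮)
    (n𝔭 n𝔮 : K[X])
    (hn𝔭 : n𝔭.map (algebraMap K ℍ[K,α,β]) = 𝔭 * conjPoly 𝔭)
    (hn𝔮 : n𝔮.map (algebraMap K ℍ[K,α,β]) = 𝔮 * conjPoly 𝔮)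
    (hcop : IsCoprime n𝔭 n𝔮) :
    ∃ 𝔭₁ 𝔮₁ : Polynomial ℍ[K,α,β],
      𝔭₁.Monic ∧ 𝔮₁.Monic ∧ Irreducible 𝔭₁ ∧ Irreducible 𝔮₁ ∧
      𝔭₁ * conjPoly 𝔭₁ = 𝔭 * conjPoly 𝔭 ∧
      𝔮₁ * conjPoly 𝔮₁ = 𝔮 * conjPoly 𝔮 ∧
      𝔭 * 𝔮 = 𝔮₁ * 𝔭₁ := by
  classical
  haveI := nzd hdiv
  by_cases h2 : (2:K) = 0
  · exact ⟨𝔭, 𝔮, h𝔭m, h𝔮m, h𝔭i, h𝔮i, rfl, rfl,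
      poly_comm (fun i j => comm_of_two h2 _ _)⟩
  -- main case
  have hinj : Function.Injective (algebraMap K ℍ[K,α,β]) :=
    QuaternionAlgebra.algebraMap_injective
  have hmapinj : Function.Injective (Polynomial.map (algebraMap K ℍ[K,α,β])) :=
    Polynomial.map_injective _ hinj
  set m𝔭 := n𝔭.map (algebraMap K ℍ[K,α,β]) with hm𝔭def
  set m𝔮 := n𝔮.map (algebraMap K ℍ[K,α,β]) with hm𝔮def
  have cent𝔭 : ∀ r, m𝔭 * r = r * m𝔭 := by
    intro r; rw [hm𝔭def]; exact central_map n𝔭 r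
  have cent𝔮 : ∀ r, m𝔮 * r = r * m𝔮 := by
    intro r; rw [hm𝔮def]; exact central_map n𝔮 r
  have conjm𝔭 : conjPoly m𝔭 = m𝔭 := by rw [hm𝔭def]; exact conjPoly_map n𝔭
  have conjm𝔮 : conjPoly m𝔮 = m𝔮 := by rw [hm𝔮def]; exact conjPoly_map n𝔮
  have h𝔭0 : 𝔭 ≠ 0 := h𝔭m.ne_zero
  have h𝔮0 : 𝔮 ≠ 0 := h𝔮m.ne_zero
  have hc𝔭0 : conjPoly 𝔭 ≠ 0 := fun h => h𝔭0 (conjPoly_eq_zero h)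
  have hc𝔮0 : conjPoly 𝔮 ≠ 0 := fun h => h𝔮0 (conjPoly_eq_zero h)
  set f := 𝔭 * 𝔮 with hfdef
  have hfm : f.Monic := h𝔭m.mul h𝔮m
  have hf0 : f ≠ 0 := hfm.ne_zero
  have flip𝔭 : conjPoly 𝔭 * 𝔭 = m𝔭 := by
    apply mul_left_cancel₀ h𝔭0
    calc 𝔭 * (conjPoly 𝔭 * 𝔭) = (𝔭 * conjPoly 𝔭) * 𝔭 := by noncomm_ring
      _ = m𝔭 * 𝔭 := by rw [← hn𝔭]
      _ = 𝔭 * m𝔭 := cent𝔭 𝔭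
  have flip𝔮 : conjPoly 𝔮 * 𝔮 = m𝔮 := by
    apply mul_left_cancel₀ h𝔮0
    calc 𝔮 * (conjPoly 𝔮 * 𝔮) = (𝔮 * conjPoly 𝔮) * 𝔮 := by noncomm_ring
      _ = m𝔮 * 𝔮 := by rw [← hn𝔮]
      _ = 𝔮 * m𝔮 := cent𝔮 𝔮
  have hfc : f * conjPoly f = m𝔮 * m𝔭 := by
    calc f * conjPoly f = 𝔭 * ((𝔮 * conjPoly 𝔮) * conjPoly 𝔭) := by
          rw [hfdef, conjPoly_mul]; noncomm_ring
      _ = 𝔭 * (m𝔮 * conjPoly 𝔭) := by rw [← hn𝔮]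
      _ = (𝔭 * m𝔮) * conjPoly 𝔭 := by rw [← mul_assoc]
      _ = (m𝔮 * 𝔭) * conjPoly 𝔭 := by rw [cent𝔮 𝔭]
      _ = m𝔮 * (𝔭 * conjPoly 𝔭) := by rw [mul_assoc]
      _ = m𝔮 * m𝔭 := by rw [← hn𝔭]
  have centmm : ∀ r, (m𝔮 * m𝔭) * r = r * (m𝔮 * m𝔭) := by
    intro r
    calc (m𝔮 * m𝔭) * r = m𝔮 * (m𝔭 * r) := by rw [mul_assoc]
      _ = m𝔮 * (r * m𝔭) := by rw [cent𝔭]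
      _ = (m𝔮 * r) * m𝔭 := by rw [← mul_assoc]
      _ = (r * m𝔮) * m𝔭 := by rw [cent𝔮]
      _ = r * (m𝔮 * m𝔭) := by rw [mul_assoc]
  have hnorm_f : conjPoly f * f = m𝔮 * m𝔭 := by
    apply mul_left_cancel₀ hf0
    calc f * (conjPoly f * f) = (f * conjPoly f) * f := by noncomm_ring
      _ = (m𝔮 * m𝔭) * f := by rw [hfc]
      _ = f * (m𝔮 * m𝔭) := centmm f
  obtain ⟨u, v, huv⟩ := id hcop
  have hone : u.map (algebraMap K ℍ[K,α,β]) * m𝔭 + v.map (algebraMap K ℍ[K,α,β]) * m𝔮 = 1 := by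
    have h0 := congrArg (Polynomial.map (algebraMap K ℍ[K,α,β])) huv
    rw [Polynomial.map_add, Polynomial.map_mul, Polynomial.map_mul, Polynomial.map_one] at h0
    rw [← hm𝔭def, ← hm𝔮def] at h0
    exact h0
  -- the left ideal I
  set S : Set (Polynomial ℍ[K,α,β]) := {r | ∃ s, m𝔮 * r = s * f} with hSdef
  have hsub : ∀ r ∈ S, ∀ t ∈ S, r - t ∈ S := by
    rintro r ⟨s₁, h₁⟩ t ⟨s₂, h₂⟩
    exact ⟨s₁ - s₂, by rw [mul_sub, h₁, h₂, sub_mul]⟩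
  have hmulS : ∀ t : Polynomial ℍ[K,α,β], ∀ r ∈ S, t * r ∈ S := by
    rintro t r ⟨s, h₁⟩
    refine ⟨t * s, ?_⟩
    calc m𝔮 * (t * r) = (m𝔮 * t) * r := by rw [← mul_assoc]
      _ = (t * m𝔮) * r := by rw [cent𝔮]
      _ = t * (m𝔮 * r) := by rw [mul_assoc]
      _ = t * (s * f) := by rw [h₁]
      _ = (t * s) * f := by rw [← mul_assoc]
  have hfS : f ∈ S := ⟨m𝔮, rfl⟩
  obtain ⟨𝔭₁, h𝔭₁S, h𝔭₁m, hgen⟩ := exists_monic_generator hdiv hsub hmulS ⟨f, hfS, hf0⟩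
  have h𝔭₁0 : 𝔭₁ ≠ 0 := h𝔭₁m.ne_zero
  have hc𝔭₁0 : conjPoly 𝔭₁ ≠ 0 := fun h => h𝔭₁0 (conjPoly_eq_zero h)
  obtain ⟨𝔮₁, hf_eq⟩ := hgen f hfS
  have h𝔮₁m : 𝔮₁.Monic := Polynomial.Monic.of_mul_monic_right h𝔭₁m (hf_eq ▸ hfm)
  have h𝔮₁0 : 𝔮₁ ≠ 0 := h𝔮₁m.ne_zero
  have hc𝔮₁0 : conjPoly 𝔮₁ ≠ 0 := fun h => h𝔮₁0 (conjPoly_eq_zero h)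
  have hm𝔭S : m𝔭 ∈ S := ⟨conjPoly f, hnorm_f.symm⟩
  obtain ⟨w, hw⟩ := hgen m𝔭 hm𝔭S
  obtain ⟨s𝔮, hs𝔮⟩ := h𝔭₁S
  have hm𝔮_eq : m𝔮 = s𝔮 * 𝔮₁ := by
    apply mul_right_cancel₀ h𝔭₁0
    calc m𝔮 * 𝔭₁ = s𝔮 * f := hs𝔮
      _ = s𝔮 * (𝔮₁ * 𝔭₁) := by rw [hf_eq]
      _ = (s𝔮 * 𝔮₁) * 𝔭₁ := by rw [mul_assoc]
  have inj : ∀ r t : Polynomial ℍ[K,α,β], r * 𝔭₁ = t * 𝔮 → ∃ z, r = z * 𝔮₁ := by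
    intro r t h
    have hA : u.map (algebraMap K ℍ[K,α,β]) * m𝔭 * (r * 𝔭₁)
        = (u.map (algebraMap K ℍ[K,α,β]) * t * conjPoly 𝔭) * f := by
      calc u.map (algebraMap K ℍ[K,α,β]) * m𝔭 * (r * 𝔭₁)
          = u.map (algebraMap K ℍ[K,α,β]) * m𝔭 * (t * 𝔮) := by rw [h]
        _ = u.map (algebraMap K ℍ[K,α,β]) * ((m𝔭 * t) * 𝔮) := by noncomm_ring
        _ = u.map (algebraMap K ℍ[K,α,β]) * ((t * m𝔭) * 𝔮) := by rw [cent𝔭]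
        _ = u.map (algebraMap K ℍ[K,α,β]) * t * (m𝔭 * 𝔮) := by noncomm_ring
        _ = u.map (algebraMap K ℍ[K,α,β]) * t * ((conjPoly 𝔭 * 𝔭) * 𝔮) := by rw [flip𝔭]
        _ = (u.map (algebraMap K ℍ[K,α,β]) * t * conjPoly 𝔭) * f := by
              rw [hfdef]; noncomm_ring
    have hB : v.map (algebraMap K ℍ[K,α,β]) * m𝔮 * (r * 𝔭₁)
        = (v.map (algebraMap K ℍ[K,α,β]) * r * s𝔮) * f := by
      calc v.map (algebraMap K ℍ[K,α,β]) * m𝔮 * (r * 𝔭₁)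
          = v.map (algebraMap K ℍ[K,α,β]) * ((m𝔮 * r) * 𝔭₁) := by noncomm_ring
        _ = v.map (algebraMap K ℍ[K,α,β]) * ((r * m𝔮) * 𝔭₁) := by rw [cent𝔮]
        _ = v.map (algebraMap K ℍ[K,α,β]) * r * (m𝔮 * 𝔭₁) := by noncomm_ring
        _ = v.map (algebraMap K ℍ[K,α,β]) * r * (s𝔮 * f) := by rw [hs𝔮]
        _ = (v.map (algebraMap K ℍ[K,α,β]) * r * s𝔮) * f := by rw [← mul_assoc]
    have hx : r * 𝔭₁ = ((u.map (algebraMap K ℍ[K,α,β]) * t * conjPoly 𝔭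
        + v.map (algebraMap K ℍ[K,α,β]) * r * s𝔮) * 𝔮₁) * 𝔭₁ := by
      calc r * 𝔭₁ = 1 * (r * 𝔭₁) := (one_mul _).symm
        _ = (u.map (algebraMap K ℍ[K,α,β]) * m𝔭
            + v.map (algebraMap K ℍ[K,α,β]) * m𝔮) * (r * 𝔭₁) := by rw [hone]
        _ = u.map (algebraMap K ℍ[K,α,β]) * m𝔭 * (r * 𝔭₁)
            + v.map (algebraMap K ℍ[K,α,β]) * m𝔮 * (r * 𝔭₁) := by noncomm_ring
        _ = (u.map (algebraMap K ℍ[K,α,β]) * t * conjPoly 𝔭) * f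
            + (v.map (algebraMap K ℍ[K,α,β]) * r * s𝔮) * f := by rw [hA, hB]
        _ = ((u.map (algebraMap K ℍ[K,α,β]) * t * conjPoly 𝔭
            + v.map (algebraMap K ℍ[K,α,β]) * r * s𝔮) * 𝔮₁) * 𝔭₁ := by
              rw [hf_eq]; noncomm_ring
    exact ⟨_, mul_right_cancel₀ h𝔭₁0 hx⟩
  have surj : ∀ s : Polynomial ℍ[K,α,β], ∃ r y, s = r * 𝔮 + y * 𝔭₁ := by
    intro s
    refine ⟨v.map (algebraMap K ℍ[K,α,β]) * s * conjPoly 𝔮,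
      u.map (algebraMap K ℍ[K,α,β]) * s * w, ?_⟩
    calc s = 1 * s := (one_mul _).symm
      _ = (u.map (algebraMap K ℍ[K,α,β]) * m𝔭
          + v.map (algebraMap K ℍ[K,α,β]) * m𝔮) * s := by rw [hone]
      _ = u.map (algebraMap K ℍ[K,α,β]) * (m𝔭 * s)
          + v.map (algebraMap K ℍ[K,α,β]) * (m𝔮 * s) := by noncomm_ring
      _ = u.map (algebraMap K ℍ[K,α,β]) * (s * m𝔭)
          + v.map (algebraMap K ℍ[K,α,β]) * (s * m𝔮) := by rw [cent𝔭 s, cent𝔮 s]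
      _ = u.map (algebraMap K ℍ[K,α,β]) * (s * (w * 𝔭₁))
          + v.map (algebraMap K ℍ[K,α,β]) * (s * (conjPoly 𝔮 * 𝔮)) := by
            rw [← hw, flip𝔮]
      _ = v.map (algebraMap K ℍ[K,α,β]) * s * conjPoly 𝔮 * 𝔮
          + u.map (algebraMap K ℍ[K,α,β]) * s * w * 𝔭₁ := by noncomm_ring
  -- norms
  have hN𝔭self : conjPoly (𝔭₁ * conjPoly 𝔭₁) = 𝔭₁ * conjPoly 𝔭₁ := by
    rw [conjPoly_mul, conjPoly_conj]
  have hN𝔮self : conjPoly (𝔮₁ * conjPoly 𝔮₁) = 𝔮₁ * conjPoly 𝔮₁ := by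
    rw [conjPoly_mul, conjPoly_conj]
  have hNwself : conjPoly (w * conjPoly w) = w * conjPoly w := by
    rw [conjPoly_mul, conjPoly_conj]
  have hNsself : conjPoly (s𝔮 * conjPoly s𝔮) = s𝔮 * conjPoly s𝔮 := by
    rw [conjPoly_mul, conjPoly_conj]
  obtain ⟨a, ha⟩ := pullback h2 hN𝔭self
  obtain ⟨b, hb⟩ := pullback h2 hN𝔮self
  obtain ⟨c, hc⟩ := pullback h2 hNwself
  obtain ⟨d, hd⟩ := pullback h2 hNsself
  have centa : ∀ r, a.map (algebraMap K ℍ[K,α,β]) * r = r * a.map (algebraMap K ℍ[K,α,β]) :=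
    central_map a
  have centb : ∀ r, b.map (algebraMap K ℍ[K,α,β]) * r = r * b.map (algebraMap K ℍ[K,α,β]) :=
    central_map b
  have key1 : n𝔭 * n𝔭 = a * c := by
    apply hmapinj
    rw [Polynomial.map_mul, Polynomial.map_mul, ← hm𝔭def, ha, hc]
    calc m𝔭 * m𝔭 = m𝔭 * conjPoly m𝔭 := by rw [conjm𝔭]
      _ = (w * 𝔭₁) * conjPoly (w * 𝔭₁) := by rw [← hw]
      _ = w * ((𝔭₁ * conjPoly 𝔭₁) * conjPoly w) := by rw [conjPoly_mul]; noncomm_ring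
      _ = w * (conjPoly w * (𝔭₁ * conjPoly 𝔭₁)) := by rw [← ha, ← centa, ha]
      _ = (w * conjPoly w) * (𝔭₁ * conjPoly 𝔭₁) := by rw [← mul_assoc]
      _ = (𝔭₁ * conjPoly 𝔭₁) * (w * conjPoly w) := by rw [← ha, centa, ha]
  have key2 : n𝔮 * n𝔮 = b * d := by
    apply hmapinj
    rw [Polynomial.map_mul, Polynomial.map_mul, ← hm𝔮def, hb, hd]
    calc m𝔮 * m𝔮 = m𝔮 * conjPoly m𝔮 := by rw [conjm𝔮]
      _ = (s𝔮 * 𝔮₁) * conjPoly (s𝔮 * 𝔮₁) := by rw [← hm𝔮_eq]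
      _ = s𝔮 * ((𝔮₁ * conjPoly 𝔮₁) * conjPoly s𝔮) := by rw [conjPoly_mul]; noncomm_ring
      _ = s𝔮 * (conjPoly s𝔮 * (𝔮₁ * conjPoly 𝔮₁)) := by rw [← hb, ← centb, hb]
      _ = (s𝔮 * conjPoly s𝔮) * (𝔮₁ * conjPoly 𝔮₁) := by rw [← mul_assoc]
      _ = (𝔮₁ * conjPoly 𝔮₁) * (s𝔮 * conjPoly s𝔮) := by rw [← hb, centb, hb]
  have key3 : n𝔮 * n𝔭 = b * a := by
    apply hmapinj
    rw [Polynomial.map_mul, Polynomial.map_mul, ← hm𝔭def, ← hm𝔮def, ha, hb]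
    calc m𝔮 * m𝔭 = f * conjPoly f := hfc.symm
      _ = (𝔮₁ * 𝔭₁) * conjPoly (𝔮₁ * 𝔭₁) := by rw [hf_eq]
      _ = 𝔮₁ * ((𝔭₁ * conjPoly 𝔭₁) * conjPoly 𝔮₁) := by rw [conjPoly_mul]; noncomm_ring
      _ = 𝔮₁ * (conjPoly 𝔮₁ * (𝔭₁ * conjPoly 𝔭₁)) := by rw [← ha, ← centa, ha]
      _ = (𝔮₁ * conjPoly 𝔮₁) * (𝔭₁ * conjPoly 𝔭₁) := by rw [← mul_assoc]
  have ham : a.Monic := Polynomial.monic_of_injective hinj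
    (by rw [ha]; exact h𝔭₁m.mul (monic_conjPoly h𝔭₁m))
  have hbm : b.Monic := Polynomial.monic_of_injective hinj
    (by rw [hb]; exact h𝔮₁m.mul (monic_conjPoly h𝔮₁m))
  have hn𝔭m : n𝔭.Monic := Polynomial.monic_of_injective hinj
    (by rw [← hm𝔭def, hn𝔭]; exact h𝔭m.mul (monic_conjPoly h𝔭m))
  have hn𝔮m : n𝔮.Monic := Polynomial.monic_of_injective hinj
    (by rw [← hm𝔮def, hn𝔮]; exact h𝔮m.mul (monic_conjPoly h𝔮m))
  have dvda : a ∣ n𝔭 := by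
    have cop1 : IsCoprime a n𝔮 :=
      IsCoprime.of_isCoprime_of_dvd_left (IsCoprime.pow_left (m := 2) hcop)
        ⟨c, by rw [sq]; exact key1⟩
    exact cop1.dvd_of_dvd_mul_left ⟨b, by rw [key3, mul_comm]⟩
  have dvdb : b ∣ n𝔮 := by
    have cop2 : IsCoprime b n𝔭 :=
      IsCoprime.of_isCoprime_of_dvd_left (IsCoprime.pow_left (m := 2) hcop.symm)
        ⟨d, by rw [sq]; exact key2⟩
    exact cop2.dvd_of_dvd_mul_left ⟨a, by rw [mul_comm n𝔭 n𝔮, key3]⟩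
  obtain ⟨e₁, he₁⟩ := dvda
  obtain ⟨e₂, he₂⟩ := dvdb
  have ha0 : a ≠ 0 := ham.ne_zero
  have hb0 : b ≠ 0 := hbm.ne_zero
  have he12 : e₁ * e₂ = 1 := by
    have h3 : (b * a) * (e₁ * e₂) = (b * a) * 1 := by
      calc (b * a) * (e₁ * e₂) = (b * e₂) * (a * e₁) := by ring
        _ = n𝔮 * n𝔭 := by rw [← he₁, ← he₂]
        _ = b * a := key3
        _ = (b * a) * 1 := (mul_one _).symm
    exact mul_left_cancel₀ (mul_ne_zero hb0 ha0) h3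
  have he₁0 : e₁ ≠ 0 := fun h => by simp [h] at he12
  have he₂0 : e₂ ≠ 0 := fun h => by simp [h] at he12
  have he₁m : e₁.Monic := Polynomial.Monic.of_mul_monic_left ham (he₁ ▸ hn𝔭m)
  have he₂m : e₂.Monic := Polynomial.Monic.of_mul_monic_left hbm (he₂ ▸ hn𝔮m)
  have he₁1 : e₁ = 1 := by
    have hdeg := Polynomial.natDegree_mul he₁0 he₂0
    rw [he12, Polynomial.natDegree_one] at hdeg
    exact he₁m.natDegree_eq_zero.mp (by omega)
  have he₂1 : e₂ = 1 := by
    have hdeg := Polynomial.natDegree_mul he₁0 he₂0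
    rw [he12, Polynomial.natDegree_one] at hdeg
    exact he₂m.natDegree_eq_zero.mp (by omega)
  have han : a = n𝔭 := by rw [he₁, he₁1, mul_one]
  have hbn : b = n𝔮 := by rw [he₂, he₂1, mul_one]
  have goal𝔭 : 𝔭₁ * conjPoly 𝔭₁ = 𝔭 * conjPoly 𝔭 := by
    rw [← ha, han, ← hm𝔭def, hn𝔭]
  have goal𝔮 : 𝔮₁ * conjPoly 𝔮₁ = 𝔮 * conjPoly 𝔮 := by
    rw [← hb, hbn, ← hm𝔮def, hn𝔮]
  -- degrees
  have hdeg𝔭 : 𝔭₁.natDegree = 𝔭.natDegree := by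
    have h1 : (𝔭₁ * conjPoly 𝔭₁).natDegree = (𝔭 * conjPoly 𝔭).natDegree := by rw [goal𝔭]
    rw [Polynomial.natDegree_mul h𝔭₁0 hc𝔭₁0, Polynomial.natDegree_mul h𝔭0 hc𝔭0,
      natDegree_conjPoly, natDegree_conjPoly] at h1
    omega
  have hdeg𝔮 : 𝔮₁.natDegree = 𝔮.natDegree := by
    have h1 : (𝔮₁ * conjPoly 𝔮₁).natDegree = (𝔮 * conjPoly 𝔮).natDegree := by rw [goal𝔮]
    rw [Polynomial.natDegree_mul h𝔮₁0 hc𝔮₁0, Polynomial.natDegree_mul h𝔮0 hc𝔮0,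
      natDegree_conjPoly, natDegree_conjPoly] at h1
    omega
  have hd𝔭pos : 𝔭.natDegree ≠ 0 := by
    intro h
    exact h𝔭i.not_isUnit (by rw [h𝔭m.natDegree_eq_zero.mp h]; exact isUnit_one)
  have hd𝔮pos : 𝔮.natDegree ≠ 0 := by
    intro h
    exact h𝔮i.not_isUnit (by rw [h𝔮m.natDegree_eq_zero.mp h]; exact isUnit_one)
  have hrel : 𝔭 * 𝔮 = 𝔮₁ * 𝔭₁ := by rw [← hfdef]; exact hf_eq
  have irr𝔮₁ : Irreducible 𝔮₁ :=
    irred_aux hdiv h𝔮₁m (by rw [hdeg𝔮]; exact hd𝔮pos) h𝔮0 h𝔮i inj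
  have irr𝔭₁ : Irreducible 𝔭₁ :=
    irred_aux2 hdiv h𝔭₁m (by rw [hdeg𝔭]; exact hd𝔭pos) h𝔭0 h𝔭i hrel surj
  exact ⟨𝔭₁, 𝔮₁, h𝔭₁m, h𝔮₁m, irr𝔭₁, irr𝔮₁, goal𝔭, goal𝔮, hrel⟩
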